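/- Assume here that q is real with 0 < q < 1, and let r ∈ ℕ and β ∈ ℂ. For all real x with 0 < x < 1 and all y ∈ ℂ, the r-fold q-derivative in x of the function g(x) = x^{β+r−1} · Φ₁(a, q^β; c; q; x, y) (complex powers of the positive reals x, qx, …, q^r x taken via the principal branch) satisfies (D_{x,q}^r g)(x) = ((q^β;q)_r / (1−q)^r) · x^{β−1} · Φ₁(a, q^{β+r}; c; q; x, y). -/

import Mathlib

open scoped BigOperators

noncomputable section

/-- The q-shifted factorial `(a;q)_n = ∏_{r=0}^{n-1} (1 - a q^r)`. -/
def qPoch (q a : ℂ) (n : ℕ) : ℂ := ∏ r ∈ Finset.range n, (1 - a * q ^ r)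

/-- The basic Humbert function `Φ₁(a,b;c;q;x,y)` as a double series over `ℕ × ℕ`. -/
def Phi1 (q a b c x y : ℂ) : ℂ :=
  ∑' p : ℕ × ℕ,
    qPoch q a (p.1 + p.2) * qPoch q b p.1 * x ^ p.1 * y ^ p.2 /
      (qPoch q c (p.1 + p.2) * qPoch q q p.1 * qPoch q q p.2)

/-- The basic Humbert function `Φ₂(a,b;c;q;x,y)` as a double series over `ℕ × ℕ`. -/
def Phi2 (q a b c x y : ℂ) : ℂ :=
  ∑' p : ℕ × ℕ,
    qPoch q a p.1 * qPoch q b p.2 * x ^ p.1 * y ^ p.2 /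
      (qPoch q c (p.1 + p.2) * qPoch q q p.1 * qPoch q q p.2)

/-- The basic Humbert function `Φ₃(a;b;q;x,y)` as a double series over `ℕ × ℕ`. -/
def Phi3 (q a b x y : ℂ) : ℂ :=
  ∑' p : ℕ × ℕ,
    qPoch q a p.1 * x ^ p.1 * y ^ p.2 /
      (qPoch q b (p.1 + p.2) * qPoch q q p.1 * qPoch q q p.2)

/-- The one-variable q-difference operator. -/
def qDiff (q : ℂ) (f : ℂ → ℂ) : ℂ → ℂ := fun x => (f x - f (q * x)) / ((1 - q) * x)

/-- The q-difference operator in the first variable of a two-variable function. -/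
def qDx (q : ℂ) (f : ℂ → ℂ → ℂ) : ℂ → ℂ → ℂ :=
  fun x y => (f x y - f (q * x) y) / ((1 - q) * x)

/-- The q-difference operator in the second variable of a two-variable function. -/
def qDy (q : ℂ) (f : ℂ → ℂ → ℂ) : ℂ → ℂ → ℂ :=
  fun x y => (f x y - f x (q * y)) / ((1 - q) * y)

/-- The infinite q-shifted factorial `(a;q)_∞ = ∏_{r=0}^∞ (1 - a q^r)`. -/
def qPochInf (q a : ℂ) : ℂ := ∏' r : ℕ, (1 - a * q ^ r)

/-!
Termwise, `D_q x^λ = ((1 - q^λ)/(1 - q)) x^(λ-1)`. Writing `g(x) = x^(β+r-1) ∑ F(n,k) x^n`, the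
`j`-th q-difference lowers the exponent by one and multiplies the `(n,k)` coefficient by
`(1 - q^(β+r-1-j+n))/(1 - q)`; after `r` steps the accumulated factor is
`(q^(β+n);q)_r/(1 - q)^r`, and `(q^β;q)_n (q^(β+n);q)_r = (q^β;q)_r (q^(β+r);q)_n` turns the series
into `Φ₁` with `b = q^(β+r)`.

The termwise computation is justified by absolute convergence for `|x| < 1`: `(c;q)_m` and
`(q;q)_m` tend to nonzero infinite products, so they are bounded away from `0`, and the double
series is dominated by a geometric series in `x` times the `k`-series at `n = 0`. When that
`k`-series diverges, `Phi1` is the junk value `0` of `tsum` and both sides vanish.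
-/

open Filter Topology

lemma qPoch_zero (q t : ℂ) : qPoch q t 0 = 1 := by simp [qPoch]

lemma qPoch_succ (q t : ℂ) (n : ℕ) : qPoch q t (n + 1) = (1 - t) * qPoch q (t * q) n := by
  simp only [qPoch, Finset.prod_range_succ', pow_zero, mul_one, pow_succ, mul_assoc, mul_comm q]
  ring

lemma qPoch_add (q t : ℂ) (n m : ℕ) :
    qPoch q t (n + m) = qPoch q t n * qPoch q (t * q ^ n) m := by
  simp only [qPoch, Finset.prod_range_add, pow_add, mul_assoc]

lemma qPoch_mul_qPoch_comm (q t : ℂ) (n m : ℕ) :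
    qPoch q t n * qPoch q (t * q ^ n) m = qPoch q t m * qPoch q (t * q ^ m) n := by
  rw [← qPoch_add, ← qPoch_add, add_comm]

lemma qPoch_ne_zero {q t : ℂ} (ht : ∀ m : ℕ, t * q ^ m ≠ 1) (n : ℕ) : qPoch q t n ≠ 0 :=
  Finset.prod_ne_zero_iff.2 fun m _ => sub_ne_zero.2 (ht m).symm

lemma norm_qPoch_le {q t : ℂ} (hq : ‖q‖ < 1) {R : ℝ} (ht : ‖t‖ ≤ R) (n : ℕ) :
    ‖qPoch q t n‖ ≤ Real.exp (R / (1 - ‖q‖)) := by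
  have hR : 0 ≤ R := (norm_nonneg t).trans ht
  calc ‖qPoch q t n‖ = ∏ i ∈ Finset.range n, ‖1 - t * q ^ i‖ := norm_prod _ _
    _ ≤ ∏ i ∈ Finset.range n, Real.exp (R * ‖q‖ ^ i) := by
        refine Finset.prod_le_prod (fun _ _ => norm_nonneg _) fun i _ => ?_
        calc ‖1 - t * q ^ i‖ ≤ 1 + ‖t‖ * ‖q‖ ^ i := by
              simpa [norm_mul, norm_pow] using norm_sub_le (1 : ℂ) (t * q ^ i)
          _ ≤ 1 + R * ‖q‖ ^ i := by gcongr
          _ ≤ Real.exp (R * ‖q‖ ^ i) := by linarith [Real.add_one_le_exp (R * ‖q‖ ^ i)]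
    _ = Real.exp (R * ∑ i ∈ Finset.range n, ‖q‖ ^ i) := by
        rw [← Real.exp_sum, Finset.mul_sum]
    _ ≤ Real.exp (R / (1 - ‖q‖)) := by
        have := geom_sum_Ico_le_of_lt_one (m := 0) (n := n) (norm_nonneg q) hq
        rw [pow_zero, ← Finset.range_eq_Ico] at this
        rw [div_eq_mul_one_div]
        gcongr

lemma summable_norm_mul_pow {q : ℂ} (hq : ‖q‖ < 1) (t : ℂ) :
    Summable fun i : ℕ => ‖t * q ^ i‖ := by
  simpa [norm_mul, norm_pow] using
    (summable_geometric_of_lt_one (norm_nonneg q) hq).mul_left ‖t‖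

lemma tendsto_qPoch_qPochInf {q : ℂ} (hq : ‖q‖ < 1) (t : ℂ) :
    Tendsto (qPoch q t) atTop (𝓝 (qPochInf q t)) := by
  have h := (multipliable_one_add_of_summable (f := fun i : ℕ => -(t * q ^ i))
    (by simpa using summable_norm_mul_pow hq t)).tendsto_prod_tprod_nat
  simp only [← sub_eq_add_neg] at h
  exact h

lemma qPochInf_ne_zero {q t : ℂ} (hq : ‖q‖ < 1) (ht : ∀ m : ℕ, t * q ^ m ≠ 1) :
    qPochInf q t ≠ 0 := by
  have h := tprod_one_add_ne_zero_of_summable (f := fun i : ℕ => -(t * q ^ i))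
    (fun i => by simpa [← sub_eq_add_neg, sub_eq_zero] using (ht i).symm)
    (by simpa using summable_norm_mul_pow hq t)
  simpa [qPochInf, ← sub_eq_add_neg] using h

lemma exists_norm_inv_qPoch_le {q t : ℂ} (hq : ‖q‖ < 1) (ht : ∀ m : ℕ, t * q ^ m ≠ 1) :
    ∃ M, ∀ n, ‖(qPoch q t n)⁻¹‖ ≤ M := by
  obtain ⟨M, hM⟩ := isBounded_iff_forall_norm_le.1 <| Metric.isBounded_range_of_tendsto _
    ((tendsto_qPoch_qPochInf hq t).inv₀ (qPochInf_ne_zero hq ht))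
  exact ⟨M, fun n => hM _ ⟨n, rfl⟩⟩

def phi1Coeff (q a b c y : ℂ) (p : ℕ × ℕ) : ℂ :=
  qPoch q a (p.1 + p.2) * qPoch q b p.1 * y ^ p.2 /
    (qPoch q c (p.1 + p.2) * qPoch q q p.1 * qPoch q q p.2)

lemma Phi1_eq_tsum (q a b c x y : ℂ) :
    Phi1 q a b c x y = ∑' p : ℕ × ℕ, phi1Coeff q a b c y p * x ^ p.1 :=
  tsum_congr fun p => by simp only [phi1Coeff]; ring

lemma Phi1_eq_zero_of_not_summable {q a c y : ℂ}
    (hrow : ¬ Summable fun k : ℕ => qPoch q a k * y ^ k / (qPoch q c k * qPoch q q k))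
    (b x : ℂ) : Phi1 q a b c x y = 0 := by
  refine tsum_eq_zero_of_not_summable fun hs => hrow ?_
  refine (hs.comp_injective (i := fun k : ℕ => ((0, k) : ℕ × ℕ))
    fun _ _ h => (Prod.ext_iff.1 h).2).congr fun k => ?_
  simp [qPoch_zero]

lemma phi1Coeff_mul_qPoch (q a b c y : ℂ) (r : ℕ) (p : ℕ × ℕ) :
    phi1Coeff q a b c y p * qPoch q (b * q ^ p.1) r =
      qPoch q b r * phi1Coeff q a (b * q ^ r) c y p := by
  have h := qPoch_mul_qPoch_comm q b p.1 r
  simp only [phi1Coeff]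
  linear_combination qPoch q a (p.1 + p.2) * y ^ p.2 /
    (qPoch q c (p.1 + p.2) * qPoch q q p.1 * qPoch q q p.2) * h

lemma phi1Coeff_eq_mul {q a b c y : ℂ} (hc : ∀ m : ℕ, c * q ^ m ≠ 1) (n k : ℕ) :
    phi1Coeff q a b c y (n, k) =
      qPoch q a k * y ^ k / (qPoch q c k * qPoch q q k) *
        (qPoch q (a * q ^ k) n * qPoch q b n * qPoch q c k *
          (qPoch q c (n + k))⁻¹ * (qPoch q q n)⁻¹) := by
  have hck := qPoch_ne_zero hc k
  simp only [phi1Coeff]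
  rw [add_comm n k, qPoch_add q a k n]
  field_simp

lemma summable_norm_phi1Coeff_mul_pow {q a b c y : ℂ} (hq : ‖q‖ < 1)
    (hc : ∀ m : ℕ, c * q ^ m ≠ 1)
    (hrow : Summable fun k : ℕ => qPoch q a k * y ^ k / (qPoch q c k * qPoch q q k))
    {s : ℝ} (hs0 : 0 ≤ s) (hs1 : s < 1) :
    Summable fun p : ℕ × ℕ => ‖phi1Coeff q a b c y p‖ * s ^ p.1 := by
  have hqq : ∀ m : ℕ, q * q ^ m ≠ 1 := fun m h => by
    have : ‖q * q ^ m‖ < 1 := by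
      rw [← pow_succ', norm_pow]; exact pow_lt_one₀ (norm_nonneg q) hq (Nat.succ_ne_zero m)
    simp [h] at this
  obtain ⟨Mc, hMc⟩ := exists_norm_inv_qPoch_le hq hc
  obtain ⟨Mq, hMq⟩ := exists_norm_inv_qPoch_le hq hqq
  set E := fun t : ℂ => Real.exp (‖t‖ / (1 - ‖q‖))
  have haq : ∀ k n, ‖qPoch q (a * q ^ k) n‖ ≤ E a := fun k n =>
    norm_qPoch_le hq (by
      simpa [norm_mul, norm_pow] using
        mul_le_of_le_one_right (norm_nonneg a) (pow_le_one₀ (norm_nonneg q) hq.le)) n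
  have hbound : ∀ p : ℕ × ℕ, ‖phi1Coeff q a b c y p‖ * s ^ p.1 ≤
      E a * E b * E c * Mc * Mq *
        (s ^ p.1 * ‖qPoch q a p.2 * y ^ p.2 / (qPoch q c p.2 * qPoch q q p.2)‖) := by
    rintro ⟨n, k⟩
    have hX : ‖qPoch q (a * q ^ k) n * qPoch q b n * qPoch q c k *
        (qPoch q c (n + k))⁻¹ * (qPoch q q n)⁻¹‖ ≤ E a * E b * E c * Mc * Mq := by
      simp only [norm_mul]
      gcongr
      exacts [mul_nonneg (by positivity) ((norm_nonneg _).trans (hMc 0)), haq k n,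
        norm_qPoch_le hq le_rfl n, norm_qPoch_le hq le_rfl k, hMc _, hMq _]
    rw [phi1Coeff_eq_mul hc, norm_mul]
    calc _ ≤ ‖qPoch q a k * y ^ k / (qPoch q c k * qPoch q q k)‖ *
          (E a * E b * E c * Mc * Mq) * s ^ n := by gcongr
      _ = _ := by ring
  exact Summable.of_nonneg_of_le (fun p => by positivity) hbound <|
    ((summable_geometric_of_lt_one hs0 hs1).mul_of_nonneg hrow.norm
      (fun n => by positivity) (fun k => norm_nonneg _)).mul_left _

lemma summable_mul_mul_pow_of_norm_le {F : ℕ × ℕ → ℂ} {s : ℝ}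
    (hF : Summable fun p : ℕ × ℕ => ‖F p‖ * s ^ p.1) {w : ℕ → ℂ} {W : ℝ}
    (hw : ∀ n, ‖w n‖ ≤ W) {z : ℂ} (hz : ‖z‖ ≤ s) :
    Summable fun p : ℕ × ℕ => F p * w p.1 * z ^ p.1 := by
  have hW : 0 ≤ W := (norm_nonneg _).trans (hw 0)
  refine (hF.mul_left W).of_norm_bounded fun p => ?_
  rw [norm_mul, norm_mul, norm_pow]
  calc ‖F p‖ * ‖w p.1‖ * ‖z‖ ^ p.1 ≤ ‖F p‖ * W * s ^ p.1 := by gcongr; exact hw _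
    _ = _ := by ring

lemma qDiff_eq_cpow_mul_tsum {q t : ℝ} (hq : 0 < q) (hq1 : q ≠ 1) (ht : 0 < t) (e : ℂ)
    {F : ℕ × ℕ → ℂ} (hF : Summable fun p : ℕ × ℕ => F p * (t : ℂ) ^ p.1)
    (hFq : Summable fun p : ℕ × ℕ => F p * ((q : ℂ) * t) ^ p.1) {f : ℂ → ℂ}
    (hft : f t = (t : ℂ) ^ e * ∑' p : ℕ × ℕ, F p * (t : ℂ) ^ p.1)
    (hfqt : f (q * t) = ((q : ℂ) * t) ^ e * ∑' p : ℕ × ℕ, F p * ((q : ℂ) * t) ^ p.1) :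
    qDiff q f t = (t : ℂ) ^ (e - 1) *
      ∑' p : ℕ × ℕ, F p * ((1 - (q : ℂ) ^ e * (q : ℂ) ^ p.1) / (1 - q)) * (t : ℂ) ^ p.1 := by
  have ht0 : (t : ℂ) ≠ 0 := by exact_mod_cast ht.ne'
  have hq1' : (1 : ℂ) - q ≠ 0 := sub_ne_zero.2 (by exact_mod_cast hq1.symm)
  have hsplit : ((q : ℂ) * t) ^ e = (q : ℂ) ^ e * (t : ℂ) ^ e :=
    Complex.mul_cpow_ofReal_nonneg hq.le ht.le e
  have hsum : ∑' p : ℕ × ℕ, F p * ((1 - (q : ℂ) ^ e * (q : ℂ) ^ p.1) / (1 - q)) * (t : ℂ) ^ p.1 =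
      ((∑' p : ℕ × ℕ, F p * (t : ℂ) ^ p.1) -
        (q : ℂ) ^ e * ∑' p : ℕ × ℕ, F p * ((q : ℂ) * t) ^ p.1) / (1 - q) := by
    rw [← tsum_mul_left, ← hF.tsum_sub (hFq.mul_left _), ← tsum_div_const]
    exact tsum_congr fun p => by rw [mul_pow]; ring
  rw [qDiff, hft, hfqt, hsplit, hsum, Complex.cpow_sub _ _ ht0, Complex.cpow_one]
  field_simp

lemma iterate_qDiff_cpow_mul_tsum {q : ℝ} (hq0 : 0 < q) (hq1 : q < 1) (e : ℂ)
    {F : ℕ × ℕ → ℂ}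
    (hF : ∀ s : ℝ, 0 ≤ s → s < 1 → Summable fun p : ℕ × ℕ => ‖F p‖ * s ^ p.1)
    (j : ℕ) {t : ℝ} (ht0 : 0 < t) (ht1 : t < 1) :
    (qDiff q)^[j] (fun z => z ^ e * ∑' p : ℕ × ℕ, F p * z ^ p.1) t =
      (t : ℂ) ^ (e - j) * ∑' p : ℕ × ℕ,
        F p * (qPoch q ((q : ℂ) ^ (e + 1 - j) * (q : ℂ) ^ p.1) j / (1 - q) ^ j) *
          (t : ℂ) ^ p.1 := by
  induction j generalizing t with
  | zero => simp [qPoch_zero]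
  | succ j ih =>
    have hq0' : (q : ℂ) ≠ 0 := by exact_mod_cast hq0.ne'
    have hq1' : ‖(q : ℂ)‖ < 1 := by rwa [Complex.norm_of_nonneg hq0.le]
    set w : ℕ → ℂ := fun n => qPoch q ((q : ℂ) ^ (e + 1 - j) * (q : ℂ) ^ n) j / (1 - q) ^ j
    have hw : ∀ n, ‖w n‖ ≤ Real.exp (‖(q : ℂ) ^ (e + 1 - j)‖ / (1 - ‖(q : ℂ)‖)) /
        ‖(1 : ℂ) - q‖ ^ j := fun n => by
      rw [norm_div, norm_pow]
      gcongr
      refine norm_qPoch_le hq1' ?_ j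
      rw [norm_mul, norm_pow]
      exact mul_le_of_le_one_right (norm_nonneg _) (pow_le_one₀ (norm_nonneg _) hq1'.le)
    have ht : ‖(t : ℂ)‖ ≤ t := (Complex.norm_of_nonneg ht0.le).le
    have hqt : ‖(q : ℂ) * t‖ ≤ t := by
      rw [norm_mul, Complex.norm_of_nonneg ht0.le]
      exact mul_le_of_le_one_left ht0.le hq1'.le
    rw [Function.iterate_succ_apply',
      qDiff_eq_cpow_mul_tsum hq0 hq1.ne ht0 (e - j) (F := fun p => F p * w p.1)
        (summable_mul_mul_pow_of_norm_le (hF t ht0.le ht1) hw ht)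
        (summable_mul_mul_pow_of_norm_le (hF t ht0.le ht1) hw hqt) (ih ht0 ht1)
        (by simpa only [Complex.ofReal_mul] using ih (mul_pos hq0 ht0) (by nlinarith))]
    have hexp : e - j - 1 = e - ((j + 1 : ℕ) : ℂ) := by push_cast; ring
    refine hexp ▸ congrArg _ (tsum_congr fun p => ?_)
    have hbase : e + 1 - ((j + 1 : ℕ) : ℂ) = e - j := by push_cast; ring
    have hshift : (q : ℂ) ^ (e - j) * q ^ p.1 * q = (q : ℂ) ^ (e + 1 - j) * q ^ p.1 := by
      rw [show e + 1 - j = (e - j) + 1 by ring, Complex.cpow_add _ _ hq0', Complex.cpow_one]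
      ring
    have hq1'' : (1 : ℂ) - q ≠ 0 := sub_ne_zero.2 (by exact_mod_cast hq1.ne')
    rw [hbase, qPoch_succ, hshift, pow_succ]
    simp only [w]
    field_simp

/-- differentiation formula
`D_{x,q}^r [x^{β+r-1} Φ₁(a, q^β; c; q; x, y)] = ((q^β;q)_r/(1-q)^r) x^{β-1} Φ₁(a, q^{β+r}; c; q; x, y)`
for real `0 < q < 1` and real `0 < x < 1`, complex powers via the principal branch. -/
theorem phi1_diff_formula (q : ℝ) (hq0 : 0 < q) (hq1 : q < 1) (a c β : ℂ)
    (hc : ∀ m : ℕ, c ≠ (q : ℂ) ^ (-(m : ℤ))) (r : ℕ) (x : ℝ) (hx0 : 0 < x) (hx1 : x < 1)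
    (y : ℂ) :
    (qDiff (q : ℂ))^[r]
        (fun z : ℂ => z ^ (β + (r : ℂ) - 1) * Phi1 (q : ℂ) a ((q : ℂ) ^ β) c z y) (x : ℂ) =
      qPoch (q : ℂ) ((q : ℂ) ^ β) r / (1 - (q : ℂ)) ^ r * (x : ℂ) ^ (β - 1) *
        Phi1 (q : ℂ) a ((q : ℂ) ^ (β + (r : ℂ))) c (x : ℂ) y := by
  by_cases hrow : Summable fun k : ℕ =>
      qPoch (q : ℂ) a k * y ^ k / (qPoch (q : ℂ) c k * qPoch (q : ℂ) (q : ℂ) k)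
  · have hq : ‖(q : ℂ)‖ < 1 := by rwa [Complex.norm_of_nonneg hq0.le]
    have hc' : ∀ m : ℕ, c * (q : ℂ) ^ m ≠ 1 := fun m h =>
      hc m (by rw [zpow_neg, zpow_natCast]; exact eq_inv_of_mul_eq_one_left h)
    simp_rw [Phi1_eq_tsum]
    rw [iterate_qDiff_cpow_mul_tsum hq0 hq1 _
        (fun s hs0 hs1 => summable_norm_phi1Coeff_mul_pow hq hc' hrow hs0 hs1) r hx0 hx1,
      show β + r - 1 + 1 - r = β by ring, show β + r - 1 - r = β - 1 by ring,
      Complex.cpow_add _ _ (by exact_mod_cast hq0.ne'), Complex.cpow_natCast]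
    rw [mul_comm (qPoch _ _ _ / _), mul_assoc]
    congr 1
    rw [← tsum_mul_left]
    refine tsum_congr fun p => ?_
    linear_combination (x : ℂ) ^ p.1 / (1 - (q : ℂ)) ^ r *
      phi1Coeff_mul_qPoch (q : ℂ) a ((q : ℂ) ^ β) c y r p
  · have hzero : qDiff (q : ℂ) (fun _ => 0) = fun _ => 0 := funext fun _ => by simp [qDiff]
    simp [Phi1_eq_zero_of_not_summable hrow, Function.iterate_fixed hzero]
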